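/- Let Φ : G → GL(V) be a measurable representation of a group G on a finite-dimensional normed real vector space V, and μ a probability measure on G with ∫ log‖Φ(g)‖ dμ(g) < ∞. For n ≥ 1 let Z_n' : [0,1] → ℝ be the standard realisation of the law of log‖Φ(g)‖ under μ^{*n}. Then for every η > 0 there exist α > 0 and N' ≥ 0 such that for all n ≥ N', E[Z_n' 𝟙_{[0,α]}] ≤ nη. -/

import Mathlib

open MeasureTheory Set Filter
open scoped ENNReal

/-- The standard realisation of a real random variable with law induced by `(P, Z)`:
`Z'(s) = sup {t : P(Z ≥ t) ≥ s}`, on `[0,1]` with Lebesgue measure. -/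
noncomputable def stdReal {E : Type*} [MeasurableSpace E] (P : Measure E) (Z : E → ℝ) :
    ℝ → ℝ :=
  fun s => sSup {t : ℝ | ENNReal.ofReal s ≤ P {e | t ≤ Z e}}

/-- Convolution of two measures on a (measurable) monoid. -/
noncomputable def mconv {G : Type*} [Monoid G] [MeasurableSpace G]
    (μ ν : Measure G) : Measure G :=
  (μ.prod ν).map fun p => p.1 * p.2

/-- `n`-fold convolution power `μ^{*n}`. -/
noncomputable def convPow {G : Type*} [Monoid G] [MeasurableSpace G]
    (μ : Measure G) : ℕ → Measure G
  | 0 => Measure.dirac 1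
  | n + 1 => mconv μ (convPow μ n)

/-! The tail `∫ (log‖Φ g‖ - K)⁺ dμ` tends to `0` as `K → ∞`; fix `K > 0` with tail below `η / 2`.
Since `g ↦ log‖Φ g‖` is subadditive, `(log‖Φ (g h)‖ - (n+1)K)⁺ ≤ (log‖Φ g‖ - K)⁺ + (log‖Φ h‖ - nK)⁺`,
so under `μ^{*n}` the tail beyond `nK` is at most `n η / 2`. The standard realisation `Z_n'` is
stochastically dominated on `[0,1]` by `log‖Φ‖` under `μ^{*n}`, hence for `α ≤ η / (2K)`
`∫_0^α Z_n' ≤ nKα + ∫ (Z_n' - nK)⁺ ≤ nη/2 + nη/2`. -/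

open Topology

lemma lintegral_ofReal_le_of_measure_lt_le {X Y : Type*} [MeasurableSpace X] [MeasurableSpace Y]
    {μ : Measure X} {ν : Measure Y} {f : X → ℝ} {g : Y → ℝ}
    (hf : AEMeasurable f μ) (hg : AEMeasurable g ν)
    (h : ∀ t : ℝ, 0 < t → μ {a | t < f a} ≤ ν {b | t < g b}) :
    ∫⁻ a, ENNReal.ofReal (f a) ∂μ ≤ ∫⁻ b, ENNReal.ofReal (g b) ∂ν := by
  calc ∫⁻ a, ENNReal.ofReal (f a) ∂μ = ∫⁻ a, ENNReal.ofReal (max (f a) 0) ∂μ := by simp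
    _ = ∫⁻ t in Ioi 0, μ {a | t < max (f a) 0} :=
        lintegral_eq_lintegral_meas_lt μ (ae_of_all _ fun _ => le_max_right _ _)
          (hf.max aemeasurable_const)
    _ ≤ ∫⁻ t in Ioi 0, ν {b | t < max (g b) 0} :=
        setLIntegral_mono' measurableSet_Ioi fun t (ht : 0 < t) => by
          simpa only [lt_max_iff, ht.not_gt, or_false] using h t ht
    _ = ∫⁻ b, ENNReal.ofReal (max (g b) 0) ∂ν :=
        (lintegral_eq_lintegral_meas_lt ν (ae_of_all _ fun _ => le_max_right _ _)
          (hg.max aemeasurable_const)).symm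
    _ = ∫⁻ b, ENNReal.ofReal (g b) ∂ν := by simp

lemma integral_le_of_lintegral_ofReal_le {X : Type*} [MeasurableSpace X] {μ : Measure X}
    {f : X → ℝ} {b : ℝ} (hb : 0 ≤ b) (h : ∫⁻ a, ENNReal.ofReal (f a) ∂μ ≤ ENNReal.ofReal b) :
    ∫ a, f a ∂μ ≤ b := by
  by_cases hf : Integrable f μ
  · have hpos := ENNReal.toReal_mono ENNReal.ofReal_ne_top h
    rw [ENNReal.toReal_ofReal hb] at hpos
    rw [integral_eq_lintegral_pos_part_sub_lintegral_neg_part hf]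
    linarith [ENNReal.toReal_nonneg (a := ∫⁻ a, ENNReal.ofReal (-f a) ∂μ)]
  · rw [integral_undef hf]
    exact hb

lemma tendsto_lintegral_ofReal_sub_atTop {X : Type*} [MeasurableSpace X] {μ : Measure X}
    {f : X → ℝ} (hf : Integrable f μ) :
    Tendsto (fun K : ℝ => ∫⁻ a, ENNReal.ofReal (f a - K) ∂μ) atTop (𝓝 0) := by
  have hlim := tendsto_lintegral_filter_of_dominated_convergence' (μ := μ) (l := atTop)
    (F := fun (K : ℝ) a => ENNReal.ofReal (f a - K)) (f := fun _ => 0) (fun a => ‖f a‖ₑ)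
    (Eventually.of_forall fun K => (hf.aemeasurable.sub_const K).ennreal_ofReal)
    ((eventually_ge_atTop 0).mono fun K hK => ae_of_all _ fun a =>
      (ENNReal.ofReal_le_ofReal (by linarith)).trans (Real.ofReal_le_enorm (f a)))
    hf.2.ne
    (ae_of_all _ fun a => tendsto_const_nhds.congr' <|
      (eventually_ge_atTop (f a)).mono fun K hK => (ENNReal.ofReal_of_nonpos (by linarith)).symm)
  simpa using hlim

lemma exists_pos_lintegral_ofReal_sub_lt {X : Type*} [MeasurableSpace X] {μ : Measure X}
    {f : X → ℝ} (hf : Integrable f μ) {ε : ℝ≥0∞} (hε : 0 < ε) :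
    ∃ K : ℝ, 0 < K ∧ ∫⁻ a, ENNReal.ofReal (f a - K) ∂μ < ε :=
  (((tendsto_lintegral_ofReal_sub_atTop hf).eventually (gt_mem_nhds hε)).and
    (eventually_gt_atTop 0)).exists.imp fun _ hK => ⟨hK.2, hK.1⟩

section StandardRealisation

variable {E : Type*} [MeasurableSpace E] {P : Measure E} [IsProbabilityMeasure P] {Z : E → ℝ}

lemma stdReal_set_nonempty {s : ℝ} (hs : s < 1) :
    {t : ℝ | ENNReal.ofReal s ≤ P {e | t ≤ Z e}}.Nonempty := by
  have hmono : Monotone fun n : ℕ => {e | -(n : ℝ) ≤ Z e} :=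
    fun n m hnm e (he : -(n : ℝ) ≤ Z e) => (neg_le_neg (Nat.cast_le.2 hnm)).trans he
  have hunion : ⋃ n : ℕ, {e | -(n : ℝ) ≤ Z e} = univ :=
    eq_univ_of_forall fun e => mem_iUnion.2 <|
      (exists_nat_ge (-Z e)).imp fun n hn => show -(n : ℝ) ≤ Z e by linarith
  have hlim := tendsto_measure_iUnion_atTop (μ := P) hmono
  rw [hunion, measure_univ] at hlim
  obtain ⟨n, hn⟩ := (hlim.eventually_const_le (ENNReal.ofReal_lt_one.2 hs)).exists
  exact ⟨-(n : ℝ), hn⟩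

lemma stdReal_set_bddAbove (hZ : Measurable Z) {s : ℝ} (hs : 0 < s) :
    BddAbove {t : ℝ | ENNReal.ofReal s ≤ P {e | t ≤ Z e}} := by
  have hanti : Antitone fun n : ℕ => {e | (n : ℝ) ≤ Z e} :=
    fun n m hnm e (he : (m : ℝ) ≤ Z e) => (Nat.cast_le.2 hnm).trans he
  have hinter : ⋂ n : ℕ, {e | (n : ℝ) ≤ Z e} = ∅ :=
    eq_empty_of_forall_notMem fun e he =>
      (exists_nat_gt (Z e)).elim fun n hn => (mem_iInter.1 he n).not_gt hn
  have hlim := tendsto_measure_iInter_atTop (μ := P) (s := fun n : ℕ => {e | (n : ℝ) ≤ Z e})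
    (fun n => (hZ measurableSet_Ici).nullMeasurableSet) hanti ⟨0, measure_ne_top _ _⟩
  rw [hinter, measure_empty] at hlim
  obtain ⟨n, hn⟩ := (hlim.eventually_lt_const (ENNReal.ofReal_pos.2 hs)).exists
  refine ⟨n, fun t ht => le_of_not_gt fun hnt => ?_⟩
  exact (ht.trans (measure_mono fun e he => hnt.le.trans he)).not_gt hn

lemma stdReal_antitoneOn (hZ : Measurable Z) : AntitoneOn (stdReal P Z) (Ioo 0 1) :=
  fun _ hs₁ _ hs₂ h => csSup_le_csSup (stdReal_set_bddAbove hZ hs₁.1)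
    (stdReal_set_nonempty hs₂.2) fun _ ht => (ENNReal.ofReal_le_ofReal h).trans ht

lemma aemeasurable_stdReal (hZ : Measurable Z) :
    AEMeasurable (stdReal P Z) (volume.restrict (Icc 0 1)) := by
  rw [← Measure.restrict_congr_set Ioo_ae_eq_Icc]
  exact aemeasurable_restrict_of_antitoneOn measurableSet_Ioo (stdReal_antitoneOn hZ)

omit [IsProbabilityMeasure P] in
/-- The hypothesis `0 < t` rules out the junk value `sSup ∅ = 0`. -/
lemma ofReal_le_measure_of_lt_stdReal {s t : ℝ} (ht : 0 < t) (h : t < stdReal P Z s) :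
    ENNReal.ofReal s ≤ P {e | t < Z e} := by
  have hne : {t : ℝ | ENNReal.ofReal s ≤ P {e | t ≤ Z e}}.Nonempty := by
    by_contra hempty
    rw [stdReal, not_nonempty_iff_eq_empty.1 hempty, Real.sSup_empty] at h
    exact ht.not_gt h
  obtain ⟨t', ht'S, htt'⟩ := exists_lt_of_lt_csSup hne h
  exact ht'S.trans (measure_mono fun e he => htt'.trans_le he)

lemma volume_lt_stdReal_le {t : ℝ} (ht : 0 < t) :
    volume.restrict (Icc 0 1) {s | t < stdReal P Z s} ≤ P {e | t < Z e} := by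
  rw [Measure.restrict_apply' measurableSet_Icc]
  calc volume ({s | t < stdReal P Z s} ∩ Icc 0 1)
      ≤ volume (Icc 0 (P {e | t < Z e}).toReal) := by
        refine measure_mono fun s ⟨hs, hs01⟩ => ⟨hs01.1, ?_⟩
        exact (ENNReal.ofReal_le_iff_le_toReal (measure_ne_top P _)).1
          (ofReal_le_measure_of_lt_stdReal ht hs)
    _ = P {e | t < Z e} := by
        rw [Real.volume_Icc, sub_zero, ENNReal.ofReal_toReal (measure_ne_top P _)]

lemma lintegral_stdReal_sub_le (hZ : Measurable Z) {c : ℝ} (hc : 0 ≤ c) :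
    ∫⁻ s in Icc 0 1, ENNReal.ofReal (stdReal P Z s - c) ≤ ∫⁻ e, ENNReal.ofReal (Z e - c) ∂P :=
  lintegral_ofReal_le_of_measure_lt_le ((aemeasurable_stdReal hZ).sub_const c)
    (hZ.sub_const c).aemeasurable fun t ht => by
      simpa only [lt_sub_iff_add_lt] using volume_lt_stdReal_le (add_pos_of_pos_of_nonneg ht hc)

lemma lintegral_Icc_stdReal_le (hZ : Measurable Z) {c α : ℝ} (hc : 0 ≤ c) (hα : α ≤ 1) :
    ∫⁻ s in Icc 0 α, ENNReal.ofReal (stdReal P Z s)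
      ≤ ENNReal.ofReal (c * α) + ∫⁻ e, ENNReal.ofReal (Z e - c) ∂P :=
  calc ∫⁻ s in Icc 0 α, ENNReal.ofReal (stdReal P Z s)
      ≤ ∫⁻ s in Icc 0 α, (ENNReal.ofReal c + ENNReal.ofReal (stdReal P Z s - c)) :=
        lintegral_mono fun s =>
          (ENNReal.ofReal_le_ofReal (by linarith)).trans ENNReal.ofReal_add_le
    _ = ENNReal.ofReal (c * α) + ∫⁻ s in Icc 0 α, ENNReal.ofReal (stdReal P Z s - c) := by
        rw [lintegral_add_left measurable_const, setLIntegral_const, Real.volume_Icc, sub_zero,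
          ENNReal.ofReal_mul hc]
    _ ≤ ENNReal.ofReal (c * α) + ∫⁻ e, ENNReal.ofReal (Z e - c) ∂P := by
        gcongr
        exact (lintegral_mono_set (Icc_subset_Icc_right hα)).trans (lintegral_stdReal_sub_le hZ hc)

end StandardRealisation

section Convolution

variable {G : Type*} [Monoid G] [MeasurableSpace G] [MeasurableMul₂ G]
  (μ : Measure G) [IsProbabilityMeasure μ]

instance isProbabilityMeasure_convPow (n : ℕ) : IsProbabilityMeasure (convPow μ n) := by
  induction n with
  | zero => rw [convPow]; infer_instance
  | succ n ih => rw [convPow, mconv]; exact Measure.isProbabilityMeasure_map (by fun_prop)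

lemma lintegral_ofReal_sub_mul_le_convPow {f : G → ℝ} (hf : Measurable f)
    (hmul : ∀ g h, f (g * h) ≤ f g + f h) (hone : f 1 ≤ 0) (K : ℝ) (n : ℕ) :
    ∫⁻ g, ENNReal.ofReal (f g - n * K) ∂(convPow μ n)
      ≤ n * ∫⁻ g, ENNReal.ofReal (f g - K) ∂μ := by
  have hmeas (c : ℝ) : Measurable fun g => ENNReal.ofReal (f g - c) :=
    (hf.sub_const c).ennreal_ofReal
  induction n with
  | zero =>
    rw [convPow, lintegral_dirac' _ (hmeas _)]
    simp [ENNReal.ofReal_of_nonpos hone]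
  | succ n ih =>
    rw [convPow, mconv, lintegral_map (hmeas _) measurable_mul]
    calc ∫⁻ p : G × G, ENNReal.ofReal (f (p.1 * p.2) - (n + 1 : ℕ) * K) ∂μ.prod (convPow μ n)
        ≤ ∫⁻ p : G × G, (ENNReal.ofReal (f p.1 - K) + ENNReal.ofReal (f p.2 - n * K))
            ∂μ.prod (convPow μ n) := by
          refine lintegral_mono fun p => (ENNReal.ofReal_le_ofReal ?_).trans ENNReal.ofReal_add_le
          push_cast
          linarith [hmul p.1 p.2]
      _ = ∫⁻ g, ENNReal.ofReal (f g - K) ∂μ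
            + ∫⁻ g, ENNReal.ofReal (f g - n * K) ∂convPow μ n := by
          rw [lintegral_add_left (f := fun p : G × G => ENNReal.ofReal (f p.1 - K))
            ((hmeas K).comp measurable_fst)]
          congr 1
          exacts [measurePreserving_fst.lintegral_comp (hmeas K),
            measurePreserving_snd.lintegral_comp (hmeas _)]
      _ ≤ ∫⁻ g, ENNReal.ofReal (f g - K) ∂μ + n * ∫⁻ g, ENNReal.ofReal (f g - K) ∂μ := by
          gcongr
      _ = (n + 1 : ℕ) * ∫⁻ g, ENNReal.ofReal (f g - K) ∂μ := by
          push_cast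
          ring

end Convolution

lemma Real.log_norm_map_mul_le {G A : Type*} [Group G] [NormedRing A] (Φ : G →* A) (g h : G) :
    Real.log ‖Φ (g * h)‖ ≤ Real.log ‖Φ g‖ + Real.log ‖Φ h‖ := by
  rcases subsingleton_or_nontrivial A with hA | hA
  · simp [Subsingleton.elim (Φ _) 0]
  · have hpos (x : G) : 0 < ‖Φ x‖ := norm_pos_iff.2 ((Group.isUnit x).map Φ).ne_zero
    rw [← Real.log_mul (hpos g).ne' (hpos h).ne']
    exact Real.log_le_log (hpos _) (map_mul Φ g h ▸ norm_mul_le _ _)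

theorem stmt9 {G V : Type*} [Group G] [MeasurableSpace G] [MeasurableMul₂ G]
    [NormedAddCommGroup V] [NormedSpace ℝ V]
    (Φ : G →* (V →L[ℝ] V)) (hΦ : Measurable fun g => Real.log ‖Φ g‖)
    (μ : Measure G) [IsProbabilityMeasure μ]
    (hmom : Integrable (fun g => Real.log ‖Φ g‖) μ) :
    ∀ η : ℝ, 0 < η → ∃ α : ℝ, 0 < α ∧ ∃ N' : ℕ, ∀ n : ℕ, N' ≤ n →
      ∫ s in Icc (0:ℝ) α, stdReal (convPow μ n) (fun g => Real.log ‖Φ g‖) s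
        ≤ n * η := by
  intro η hη
  obtain ⟨K, hK, hKμ⟩ :=
    exists_pos_lintegral_ofReal_sub_lt hmom (ENNReal.ofReal_pos.2 (half_pos hη))
  have hone : Real.log ‖Φ 1‖ ≤ 0 :=
    Real.log_nonpos (norm_nonneg _) (map_one Φ ▸ ContinuousLinearMap.norm_id_le)
  set α := min (η / (2 * K)) 1
  have hcα (n : ℕ) : n * K * α ≤ n * (η / 2) := calc
    n * K * α ≤ n * K * (η / (2 * K)) := by gcongr; exact min_le_left _ _
    _ = n * (η / 2) := by field_simp
  refine ⟨α, by positivity, 0, fun n _ => integral_le_of_lintegral_ofReal_le (by positivity) ?_⟩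
  calc ∫⁻ s in Icc 0 α, ENNReal.ofReal (stdReal (convPow μ n) (fun g => Real.log ‖Φ g‖) s)
      ≤ ENNReal.ofReal (n * K * α)
          + ∫⁻ g, ENNReal.ofReal (Real.log ‖Φ g‖ - n * K) ∂convPow μ n :=
        lintegral_Icc_stdReal_le hΦ (by positivity) (min_le_right _ _)
    _ ≤ ENNReal.ofReal (n * (η / 2)) + n * ENNReal.ofReal (η / 2) := by
        grw [ENNReal.ofReal_le_ofReal (hcα n), lintegral_ofReal_sub_mul_le_convPow μ hΦ
          (Real.log_norm_map_mul_le Φ) hone K n, hKμ.le]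
    _ = ENNReal.ofReal (n * η) := by
        rw [← ENNReal.ofReal_natCast, ← ENNReal.ofReal_mul (by positivity),
          ← ENNReal.ofReal_add (by positivity) (by positivity)]
        ring_nf
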